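/- Let G be a finite simple undirected graph in which every vertex has degree at least 1, let α ∈ (0,1), let r_max > 0, and let π_v denote the personalized PageRank vector of source v. Suppose p, r : V → ℝ satisfy the invariant π_s[t] = p[t] + Σ_{v ∈ V} r[v] π_v[t] for all t ∈ V, with 0 ≤ r[v] ≤ r_max · d_v for every v. Then for every vertex t: 0 ≤ π_s[t] − p[t] ≤ r_max · d_t. -/
import Mathlib


open Finset

variable {V : Type*} [Fintype V] [DecidableEq V]

/-- The random-walk transition matrix of `G`: `W[u,v] = 1/dᵤ` if `u ~ v`, else `0`. -/
noncomputable def transMat (G : SimpleGraph V) [DecidableRel G.Adj] : Matrix V V ℝ :=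
  fun u v => if G.Adj u v then ((G.degree u : ℝ))⁻¹ else 0

/-- Personalized PageRank: `π_s[t] = α ∑_{k≥0} (1-α)^k (W^k)[s,t]`. -/
noncomputable def ppr (G : SimpleGraph V) [DecidableRel G.Adj] (α : ℝ) (s t : V) : ℝ :=
  α * ∑' k : ℕ, (1 - α) ^ k * ((transMat G) ^ k) s t

/-- The probability that a simple random walk traverses exactly the walk `p`:
the product of `1/dᵤ` over all vertices `u` of `p` except the last. -/
noncomputable def walkProb (G : SimpleGraph V) [DecidableRel G.Adj] {s t : V}
    (p : G.Walk s t) : ℝ :=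
  (p.support.dropLast.map (fun u => ((G.degree u : ℝ))⁻¹)).prod

lemma transMat_nonneg (G : SimpleGraph V) [DecidableRel G.Adj] (u v : V) :
    0 ≤ transMat G u v := by
  unfold transMat
  split <;> positivity

lemma transMat_pow_nonneg (G : SimpleGraph V) [DecidableRel G.Adj] (k : ℕ) (u v : V) :
    0 ≤ ((transMat G) ^ k) u v := by
  induction k generalizing u v with
  | zero =>
    simp only [pow_zero, Matrix.one_apply]
    split <;> norm_num
  | succ n ih =>
    rw [pow_succ, Matrix.mul_apply]
    exact Finset.sum_nonneg fun w _ => mul_nonneg (ih u w) (transMat_nonneg G w v)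

lemma transMat_rowsum (G : SimpleGraph V) [DecidableRel G.Adj]
    (hdeg : ∀ v, 0 < G.degree v) (u : V) : ∑ v, transMat G u v = 1 := by
  unfold transMat
  rw [← Finset.sum_filter, ← SimpleGraph.neighborFinset_eq_filter, Finset.sum_const,
    SimpleGraph.card_neighborFinset_eq_degree, nsmul_eq_mul,
    mul_inv_cancel₀ (Nat.cast_ne_zero.mpr (hdeg u).ne')]

lemma transMat_pow_rowsum (G : SimpleGraph V) [DecidableRel G.Adj]
    (hdeg : ∀ v, 0 < G.degree v) (k : ℕ) (u : V) :
    ∑ v, ((transMat G) ^ k) u v = 1 := by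
  induction k generalizing u with
  | zero => simp [Matrix.one_apply]
  | succ n ih =>
    simp only [pow_succ, Matrix.mul_apply]
    rw [Finset.sum_comm]
    calc ∑ w, ∑ v, ((transMat G) ^ n) u w * transMat G w v
        = ∑ w, ((transMat G) ^ n) u w * ∑ v, transMat G w v := by
          simp [Finset.mul_sum]
      _ = ∑ w, ((transMat G) ^ n) u w := by
          simp [transMat_rowsum G hdeg]
      _ = 1 := ih u

lemma transMat_symm (G : SimpleGraph V) [DecidableRel G.Adj]
    (hdeg : ∀ v, 0 < G.degree v) (u v : V) :
    (G.degree u : ℝ) * transMat G u v = (G.degree v : ℝ) * transMat G v u := by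
  unfold transMat
  by_cases h : G.Adj u v
  · rw [if_pos h, if_pos h.symm, mul_inv_cancel₀, mul_inv_cancel₀]
    · exact Nat.cast_ne_zero.mpr (hdeg v).ne'
    · exact Nat.cast_ne_zero.mpr (hdeg u).ne'
  · rw [if_neg h, if_neg (fun h' => h h'.symm)]
    ring

lemma transMat_pow_symm (G : SimpleGraph V) [DecidableRel G.Adj]
    (hdeg : ∀ v, 0 < G.degree v) (k : ℕ) (u v : V) :
    (G.degree u : ℝ) * ((transMat G) ^ k) u v
      = (G.degree v : ℝ) * ((transMat G) ^ k) v u := by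
  induction k generalizing u v with
  | zero =>
    simp only [pow_zero, Matrix.one_apply]
    by_cases h : u = v
    · subst h; simp
    · rw [if_neg h, if_neg (Ne.symm h)]; ring
  | succ n ih =>
    conv_lhs => rw [pow_succ]
    conv_rhs => rw [pow_succ']
    rw [Matrix.mul_apply, Matrix.mul_apply, Finset.mul_sum, Finset.mul_sum]
    apply Finset.sum_congr rfl
    intro w _
    calc (G.degree u : ℝ) * (((transMat G) ^ n) u w * transMat G w v)
        = ((G.degree u : ℝ) * ((transMat G) ^ n) u w) * transMat G w v := by ring
      _ = ((G.degree w : ℝ) * ((transMat G) ^ n) w u) * transMat G w v := by rw [ih]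
      _ = ((G.degree w : ℝ) * transMat G w v) * ((transMat G) ^ n) w u := by ring
      _ = ((G.degree v : ℝ) * transMat G v w) * ((transMat G) ^ n) w u := by
          rw [transMat_symm G hdeg]
      _ = (G.degree v : ℝ) * (transMat G v w * ((transMat G) ^ n) w u) := by ring

lemma ppr_summable (G : SimpleGraph V) [DecidableRel G.Adj]
    (hdeg : ∀ v, 0 < G.degree v) {α : ℝ} (hα : α ∈ Set.Ioo (0 : ℝ) 1) (u v : V) :
    Summable (fun k : ℕ => (1 - α) ^ k * ((transMat G) ^ k) u v) := by
  have h1 : (0:ℝ) ≤ 1 - α := by linarith [hα.2]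
  have h2 : 1 - α < 1 := by linarith [hα.1]
  apply Summable.of_nonneg_of_le
    (fun k => mul_nonneg (pow_nonneg h1 k) (transMat_pow_nonneg G k u v))
    (fun k => ?_) (summable_geometric_of_lt_one h1 h2)
  have hle : ((transMat G) ^ k) u v ≤ 1 := by
    calc ((transMat G) ^ k) u v ≤ ∑ w, ((transMat G) ^ k) u w :=
        Finset.single_le_sum (fun w _ => transMat_pow_nonneg G k u w) (Finset.mem_univ v)
      _ = 1 := transMat_pow_rowsum G hdeg k u
  calc (1 - α) ^ k * ((transMat G) ^ k) u v ≤ (1 - α) ^ k * 1 :=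
      mul_le_mul_of_nonneg_left hle (pow_nonneg h1 k)
    _ = (1 - α) ^ k := mul_one _

lemma ppr_nonneg (G : SimpleGraph V) [DecidableRel G.Adj]
    {α : ℝ} (hα : α ∈ Set.Ioo (0 : ℝ) 1) (u v : V) : 0 ≤ ppr G α u v := by
  have h1 : (0:ℝ) ≤ 1 - α := by linarith [hα.2]
  apply mul_nonneg hα.1.le
  exact tsum_nonneg fun k => mul_nonneg (pow_nonneg h1 k) (transMat_pow_nonneg G k u v)

lemma ppr_total (G : SimpleGraph V) [DecidableRel G.Adj]
    (hdeg : ∀ v, 0 < G.degree v) {α : ℝ} (hα : α ∈ Set.Ioo (0 : ℝ) 1) (u : V) :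
    ∑ v, ppr G α u v = 1 := by
  have h1 : (0:ℝ) ≤ 1 - α := by linarith [hα.2]
  have h2 : 1 - α < 1 := by linarith [hα.1]
  unfold ppr
  rw [← Finset.mul_sum, ← Summable.tsum_finsetSum (fun v _ => ppr_summable G hdeg hα u v)]
  have : ∀ k : ℕ, ∑ v, (1 - α) ^ k * ((transMat G) ^ k) u v = (1 - α) ^ k := by
    intro k
    rw [← Finset.mul_sum, transMat_pow_rowsum G hdeg, mul_one]
  rw [tsum_congr this, tsum_geometric_of_lt_one h1 h2]
  have h3 : 1 - (1 - α) = α := by ring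
  rw [h3, mul_inv_cancel₀ hα.1.ne']

lemma ppr_symm (G : SimpleGraph V) [DecidableRel G.Adj]
    (hdeg : ∀ v, 0 < G.degree v) {α : ℝ} (u v : V) :
    (G.degree u : ℝ) * ppr G α u v = (G.degree v : ℝ) * ppr G α v u := by
  unfold ppr
  rw [mul_left_comm, mul_left_comm (G.degree v : ℝ) α]
  congr 1
  rw [← tsum_mul_left, ← tsum_mul_left]
  apply tsum_congr
  intro k
  calc (G.degree u : ℝ) * ((1 - α) ^ k * ((transMat G) ^ k) u v)
      = (1 - α) ^ k * ((G.degree u : ℝ) * ((transMat G) ^ k) u v) := by ring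
    _ = (1 - α) ^ k * ((G.degree v : ℝ) * ((transMat G) ^ k) v u) := by
        rw [transMat_pow_symm G hdeg]
    _ = (G.degree v : ℝ) * ((1 - α) ^ k * ((transMat G) ^ k) v u) := by ring

theorem invariant_error_bound (G : SimpleGraph V) [DecidableRel G.Adj]
    (hdeg : ∀ v, 0 < G.degree v) (α : ℝ) (hα : α ∈ Set.Ioo (0 : ℝ) 1)
    (rmax : ℝ) (hrmax : 0 < rmax) (s : V) (p r : V → ℝ)
    (hinv : ∀ t, ppr G α s t = p t + ∑ v, r v * ppr G α v t)
    (hres : ∀ v, 0 ≤ r v ∧ r v ≤ rmax * (G.degree v : ℝ)) :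
    ∀ t, 0 ≤ ppr G α s t - p t ∧ ppr G α s t - p t ≤ rmax * (G.degree t : ℝ) := by
  intro t
  have hdiff : ppr G α s t - p t = ∑ v, r v * ppr G α v t := by
    rw [hinv t]; ring
  constructor
  · rw [hdiff]
    exact Finset.sum_nonneg fun v _ => mul_nonneg (hres v).1 (ppr_nonneg G hα v t)
  · rw [hdiff]
    calc ∑ v, r v * ppr G α v t
        ≤ ∑ v, (rmax * (G.degree v : ℝ)) * ppr G α v t :=
          Finset.sum_le_sum fun v _ =>
            mul_le_mul_of_nonneg_right (hres v).2 (ppr_nonneg G hα v t)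
      _ = ∑ v, rmax * ((G.degree v : ℝ) * ppr G α v t) := by
          apply Finset.sum_congr rfl; intro v _; ring
      _ = ∑ v, rmax * ((G.degree t : ℝ) * ppr G α t v) := by
          simp_rw [ppr_symm G hdeg]
      _ = rmax * (G.degree t : ℝ) * ∑ v, ppr G α t v := by
          rw [Finset.mul_sum]; apply Finset.sum_congr rfl; intro v _; ring
      _ = rmax * (G.degree t : ℝ) := by rw [ppr_total G hdeg hα, mul_one]
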